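/- Let Λ ⊂ ℂ be a lattice of size s(Λ) (area of a fundamental domain) and σ_Λ its modified Weierstrass sigma function satisfying |σ_Λ(z)| ≲ e^{(π/(2s(Λ)))|z|²}. If s(Λ) > n+1, then the function G(z) = σ_Λ(z)^{n+1}/z is entire and belongs to the Bargmann–Fock space F₂(ℂ), i.e. ∫_ℂ |G(z)|² e^{−π|z|²} dA(z) < ∞. -/

import Mathlib

/-!
Since `σ` vanishes at `0`, `G := dslope (σ ^ (n + 1)) 0` is entire by the removable singularity
theorem, and `|G| ≤ |σ| ^ (n + 1) ≲ e^{π (n + 1) |z|² / (2s)}` away from the unit disc. Hence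
`|G|² e^{-π |z|²} = O(e^{-c |z|²})` at infinity with `c = π (1 - (n + 1) / s) > 0`, and a
continuous function with Gaussian decay is integrable.
-/

open ComplexConjugate MeasureTheory Asymptotics Bornology Filter

theorem isBigO_cobounded_dslope {𝕜 E : Type*} [NontriviallyNormedField 𝕜] [NormedAddCommGroup E]
    [NormedSpace 𝕜 E] (f : 𝕜 → E) (a : 𝕜) :
    dslope f a =O[cobounded 𝕜] fun z => f z - f a := by
  refine IsBigO.of_bound' ?_
  filter_upwards [eventually_cobounded_le_norm (‖a‖ + 1)] with z hz
  have hza : 1 ≤ ‖z - a‖ := by linarith [norm_sub_norm_le z a]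
  calc ‖dslope f a z‖ ≤ ‖z - a‖ * ‖dslope f a z‖ := le_mul_of_one_le_left (norm_nonneg _) hza
    _ = ‖f z - f a‖ := by rw [← norm_smul, sub_smul_dslope]

theorem Differentiable.dslope {E : Type*} [NormedAddCommGroup E] [NormedSpace ℂ E]
    [CompleteSpace E] {f : ℂ → E} (hf : Differentiable ℂ f) (a : ℂ) :
    Differentiable ℂ (dslope f a) := by
  rw [← differentiableOn_univ]
  exact (Complex.differentiableOn_dslope Filter.univ_mem).2 hf.differentiableOn

section Gaussian

variable {V : Type*} [NormedAddCommGroup V] [InnerProductSpace ℝ V] [FiniteDimensional ℝ V]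
  [MeasurableSpace V] [BorelSpace V]

theorem integrable_exp_neg_mul_sq_norm {b : ℝ} (hb : 0 < b) :
    Integrable (fun v : V => Real.exp (-b * ‖v‖ ^ 2)) := by
  have := (GaussianFourier.integrable_cexp_neg_mul_sq_norm_add (V := V) (b := b)
    (by simpa using hb) 0 0).norm
  simpa [Complex.norm_exp, ← Complex.ofReal_pow] using this

theorem integrable_sq_norm_mul_exp_neg_mul_sq_norm {E : Type*} [NormedAddCommGroup E]
    {G : V → E} (hG : Continuous G) {a b : ℝ}
    (hGO : G =O[cocompact V] fun v => Real.exp (a * ‖v‖ ^ 2)) (hab : 2 * a < b) :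
    Integrable (fun v => ‖G v‖ ^ 2 * Real.exp (-b * ‖v‖ ^ 2)) := by
  refine (by fun_prop : Continuous fun v => ‖G v‖ ^ 2 * Real.exp (-b * ‖v‖ ^ 2))
    |>.locallyIntegrable.integrable_of_isBigO_cocompact ?_
    ((integrable_exp_neg_mul_sq_norm (V := V) (b := b - 2 * a) (by linarith)).integrableAtFilter _)
  refine ((hGO.norm_left.pow 2).mul (isBigO_refl _ _)).congr_right fun v => ?_
  rw [← Real.exp_nat_mul, ← Real.exp_add]
  ring_nf

end Gaussian

theorem sigma_power_in_Fock_general (n : ℕ) (l₁ l₂ : ℂ)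
    (s : ℝ)
    (σ : ℂ → ℂ) (hσ : Differentiable ℂ σ)
    (hzero : ∀ z : ℂ, σ z = 0 ↔ ∃ m₁ m₂ : ℤ, z = m₁ * l₁ + m₂ * l₂)
    (hgrowth : ∃ Cg : ℝ, 0 < Cg ∧ ∀ z : ℂ,
      ‖σ z‖ ≤ Cg * Real.exp (Real.pi / (2 * s) * Complex.normSq z))
    (hsize : (n : ℝ) + 1 < s) :
    ∃ G : ℂ → ℂ, Differentiable ℂ G ∧ (∀ z : ℂ, G z * z = σ z ^ (n + 1)) ∧
      Integrable (fun z : ℂ => ‖G z‖ ^ 2 * Real.exp (-Real.pi * Complex.normSq z))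
        (volume : Measure ℂ) := by
  obtain ⟨Cg, -, hg⟩ := hgrowth
  set f : ℂ → ℂ := fun z => σ z ^ (n + 1)
  have hf0 : f 0 = 0 := by simp [f, (hzero 0).2 ⟨0, 0, by simp⟩]
  have hG : Differentiable ℂ (dslope f 0) := (hσ.pow (n + 1)).dslope 0
  refine ⟨dslope f 0, hG, fun z => by simpa [hf0, mul_comm] using sub_smul_dslope f 0 z, ?_⟩
  have hσO : σ =O[cobounded ℂ] fun z => Real.exp (Real.pi / (2 * s) * ‖z‖ ^ 2) :=
    IsBigO.of_bound Cg <| .of_forall fun z => by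
      simpa [Complex.normSq_eq_norm_sq, Real.norm_eq_abs] using hg z
  have hfO : f =O[cobounded ℂ] fun z => Real.exp ((n + 1) * (Real.pi / (2 * s)) * ‖z‖ ^ 2) :=
    (hσO.pow (n + 1)).congr_right fun z => by rw [← Real.exp_nat_mul]; push_cast; ring_nf
  have hGO := (isBigO_cobounded_dslope f 0).trans (by simpa [hf0] using hfO)
  rw [Metric.cobounded_eq_cocompact] at hGO
  simp_rw [Complex.normSq_eq_norm_sq]
  refine integrable_sq_norm_mul_exp_neg_mul_sq_norm hG.continuous hGO ?_
  have hs : 0 < s := by linarith [(n.cast_nonneg : (0 : ℝ) ≤ n)]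
  calc 2 * ((n + 1) * (Real.pi / (2 * s))) = Real.pi * ((n + 1) / s) := by field_simp
    _ < Real.pi := mul_lt_of_lt_one_right Real.pi_pos ((div_lt_one hs).2 hsize)

/-- If `Λ = ℤλ₁ + ℤλ₂` is a lattice of size `s(Λ) > n+1` and `σ_Λ` is its modified
Weierstrass sigma function (vanishing simply exactly on `Λ`, with Gaussian growth
`|σ_Λ(z)| ≲ e^{(π/(2s(Λ)))|z|²}`), then `G(z) = σ_Λ(z)^{n+1}/z` is entire and belongs to the
Bargmann-Fock space `F₂(ℂ)`. -/
theorem sigma_power_in_Fock (n : ℕ) (l₁ l₂ : ℂ) (hind : LinearIndependent ℝ ![l₁, l₂])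
    (s : ℝ) (hs : s = |((conj l₁) * l₂).im|)
    (σ : ℂ → ℂ) (hσ : Differentiable ℂ σ)
    (hzero : ∀ z : ℂ, σ z = 0 ↔ ∃ m₁ m₂ : ℤ, z = m₁ * l₁ + m₂ * l₂)
    (hsimple : ∀ z : ℂ, σ z = 0 → deriv σ z ≠ 0)
    (hgrowth : ∃ Cg : ℝ, 0 < Cg ∧ ∀ z : ℂ,
      ‖σ z‖ ≤ Cg * Real.exp (Real.pi / (2 * s) * Complex.normSq z))
    (hsize : (n : ℝ) + 1 < s) :
    ∃ G : ℂ → ℂ, Differentiable ℂ G ∧ (∀ z : ℂ, G z * z = σ z ^ (n + 1)) ∧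
      Integrable (fun z : ℂ => ‖G z‖ ^ 2 * Real.exp (-Real.pi * Complex.normSq z))
        (volume : Measure ℂ) :=
  sigma_power_in_Fock_general n l₁ l₂ s σ hσ hzero hgrowth hsize
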